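/- arXiv:2509.10473 — 2 statements merged into one kernel-verified Lean document; each statement's English description precedes it below -/
import Mathlib

section
/- Let G be a bipartite graph with parts A_G, B_G (no isolated vertices, |A_G| ≤ |B_G|), and let H be any finite graph with at least one vertex. If (|A_G| + |B_G|)/|A_G| ≥ (Δ(G) + Δ(H) + 1)·γ(H)/|V(H)|, then γ(G □ H) ≥ γ(G)·γ(H). -/
def IsDominatingSet {V : Type*} (G : SimpleGraph V) (D : Set V) : Prop :=
  ∀ v, v ∈ D ∨ ∃ u ∈ D, G.Adj u v

noncomputable def domNum {V : Type*} (G : SimpleGraph V) [Fintype V] : ℕ :=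
  sInf {n | ∃ D : Finset V, IsDominatingSet G ↑D ∧ D.card = n}

noncomputable def maxDeg {V : Type*} (G : SimpleGraph V) [Fintype V] : ℕ :=
  Finset.univ.sup fun v => (G.neighborSet v).ncard

def IsBipartition {V : Type*} (G : SimpleGraph V) (A B : Finset V) : Prop :=
  Disjoint A B ∧ (∀ v, v ∈ A ∨ v ∈ B) ∧
    ∀ u v, G.Adj u v → (u ∈ A ∧ v ∈ B) ∨ (u ∈ B ∧ v ∈ A)

/-!
Each vertex of `G □ H` dominates at most `Δ(G) + Δ(H) + 1` vertices, so
`γ(G □ H) · (Δ(G) + Δ(H) + 1) ≥ |V(G)| · |V(H)|`. The hypothesis says that the right-hand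
side is at least `(Δ(G) + Δ(H) + 1) · γ(H) · |A_G|`, and `A_G` dominates `G` because every
vertex of `B_G` has a neighbour, necessarily in `A_G`; hence `γ(G) ≤ |A_G|`.
-/

namespace SimpleGraph

variable {V W : Type*} [Fintype V] [Fintype W]

theorem exists_isDominatingSet_card_eq_domNum (G : SimpleGraph V) :
    ∃ D : Finset V, IsDominatingSet G ↑D ∧ D.card = domNum G :=
  Nat.sInf_mem (s := {n | ∃ D : Finset V, IsDominatingSet G ↑D ∧ D.card = n})
    ⟨_, Finset.univ, fun v => Or.inl (Finset.mem_coe.2 (Finset.mem_univ v)), rfl⟩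

theorem domNum_le_card_of_isDominatingSet (G : SimpleGraph V) {D : Finset V}
    (hD : IsDominatingSet G ↑D) : domNum G ≤ D.card :=
  Nat.sInf_le ⟨D, hD, rfl⟩

theorem domNum_le_card (G : SimpleGraph V) : domNum G ≤ Fintype.card V :=
  G.domNum_le_card_of_isDominatingSet (D := Finset.univ)
    fun v => Or.inl (Finset.mem_coe.2 (Finset.mem_univ v))

theorem ncard_neighborSet_le_maxDeg (G : SimpleGraph V) (v : V) :
    (G.neighborSet v).ncard ≤ maxDeg G :=
  Finset.le_sup (f := fun v => (G.neighborSet v).ncard) (Finset.mem_univ v)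

theorem card_neighborFinset_le_maxDeg (G : SimpleGraph V) [DecidableRel G.Adj] (v : V) :
    (G.neighborFinset v).card ≤ maxDeg G := by
  rw [← Set.ncard_coe_finset, coe_neighborFinset]
  exact G.ncard_neighborSet_le_maxDeg v

theorem card_le_domNum_mul_maxDeg_add_one (G : SimpleGraph V) :
    Fintype.card V ≤ domNum G * (maxDeg G + 1) := by
  classical
  obtain ⟨D, hD, hcard⟩ := exists_isDominatingSet_card_eq_domNum G
  have hcover : Finset.univ ⊆ D.biUnion fun u => insert u (G.neighborFinset u) := by
    intro v _
    rcases hD v with hv | ⟨u, hu, huv⟩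
    · exact Finset.mem_biUnion.2 ⟨v, hv, Finset.mem_insert_self _ _⟩
    · exact Finset.mem_biUnion.2
        ⟨u, hu, Finset.mem_insert_of_mem ((mem_neighborFinset _ _ _).2 huv)⟩
  rw [← hcard, ← Finset.card_univ]
  refine (Finset.card_le_card hcover).trans (Finset.card_biUnion_le_card_mul _ _ _ fun u _ => ?_)
  exact (Finset.card_insert_le _ _).trans (Nat.succ_le_succ (card_neighborFinset_le_maxDeg G u))

theorem maxDeg_boxProd_le (G : SimpleGraph V) (H : SimpleGraph W) :
    maxDeg (G □ H) ≤ maxDeg G + maxDeg H := by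
  refine Finset.sup_le fun x _ => ?_
  rw [neighborSet_boxProd, Set.prod_singleton, Set.singleton_prod]
  refine (Set.ncard_union_le _ _).trans (add_le_add ?_ ?_)
  · rw [Set.ncard_image_of_injective _ fun a b h => (Prod.mk.inj h).1]
    exact G.ncard_neighborSet_le_maxDeg x.1
  · rw [Set.ncard_image_of_injective _ fun a b h => (Prod.mk.inj h).2]
    exact H.ncard_neighborSet_le_maxDeg x.2

theorem card_mul_card_le_domNum_boxProd_mul (G : SimpleGraph V) (H : SimpleGraph W) :
    Fintype.card V * Fintype.card W ≤ domNum (G □ H) * (maxDeg G + maxDeg H + 1) :=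
  calc Fintype.card V * Fintype.card W = Fintype.card (V × W) := (Fintype.card_prod V W).symm
    _ ≤ domNum (G □ H) * (maxDeg (G □ H) + 1) := card_le_domNum_mul_maxDeg_add_one _
    _ ≤ domNum (G □ H) * (maxDeg G + maxDeg H + 1) := by
      gcongr
      exact maxDeg_boxProd_le G H

end SimpleGraph

namespace IsBipartition

variable {V : Type*} {G : SimpleGraph V} {A B : Finset V}

theorem card_add_card [Fintype V] (h : IsBipartition G A B) :
    A.card + B.card = Fintype.card V := by
  classical
  rw [← Finset.card_union_of_disjoint h.1, ← Finset.card_univ]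
  exact congrArg Finset.card (Finset.eq_univ_iff_forall.2 fun v => Finset.mem_union.2 (h.2.1 v))

theorem isDominatingSet_left (h : IsBipartition G A B) (hG : ∀ v, ∃ u, G.Adj v u) :
    IsDominatingSet G ↑A := by
  intro v
  rcases h.2.1 v with hv | hv
  · exact Or.inl hv
  · obtain ⟨u, hvu⟩ := hG v
    rcases h.2.2 v u hvu with ⟨hvA, -⟩ | ⟨-, huA⟩
    · exact Or.inl hvA
    · exact Or.inr ⟨u, huA, hvu.symm⟩

end IsBipartition

theorem stmt5_general {V W : Type*} [Fintype V] [Fintype W]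
    (G : SimpleGraph V) (H : SimpleGraph W)
    (AG BG : Finset V)
    (hGbip : IsBipartition G AG BG)
    (hGiso : ∀ v : V, ∃ u, G.Adj v u)
    (hcond : ((AG.card : ℚ) + BG.card) / AG.card ≥
      ((maxDeg G : ℚ) + maxDeg H + 1) * (domNum H : ℚ) / (Fintype.card W : ℚ)) :
    domNum (G □ H) ≥ domNum G * domNum H := by
  have hGA : domNum G ≤ AG.card :=
    G.domNum_le_card_of_isDominatingSet (hGbip.isDominatingSet_left hGiso)
  -- `γ(G) γ(H) > 0` makes both denominators of `hcond` positive, so it can be cross-multiplied.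
  rcases Nat.eq_zero_or_pos (domNum G * domNum H) with h0 | hpos
  · exact h0 ▸ Nat.zero_le _
  have hA : (0 : ℚ) < AG.card := by
    exact_mod_cast hGA.trans_lt' (Nat.pos_of_mul_pos_right hpos)
  have hW : (0 : ℚ) < Fintype.card W := by
    exact_mod_cast (H.domNum_le_card).trans_lt' (Nat.pos_of_mul_pos_left hpos)
  rw [ge_iff_le, div_le_div_iff₀ hW hA] at hcond
  have hcross : (maxDeg G + maxDeg H + 1) * domNum H * AG.card
      ≤ (AG.card + BG.card) * Fintype.card W := by exact_mod_cast hcond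
  rw [hGbip.card_add_card] at hcross
  refine Nat.le_of_mul_le_mul_right ?_ (Nat.succ_pos (maxDeg G + maxDeg H))
  calc domNum G * domNum H * (maxDeg G + maxDeg H + 1)
      ≤ (maxDeg G + maxDeg H + 1) * domNum H * AG.card := by
        rw [mul_comm, mul_comm (domNum G), ← mul_assoc]
        gcongr
    _ ≤ domNum (G □ H) * (maxDeg G + maxDeg H + 1) :=
        hcross.trans (G.card_mul_card_le_domNum_boxProd_mul H)

theorem stmt5 {V W : Type*} [Fintype V] [Fintype W] [Nonempty W]
    (G : SimpleGraph V) (H : SimpleGraph W)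
    (AG BG : Finset V)
    (hGbip : IsBipartition G AG BG)
    (hGle : AG.card ≤ BG.card)
    (hGiso : ∀ v : V, ∃ u, G.Adj v u)
    (hcond : ((AG.card : ℚ) + BG.card) / AG.card ≥
      ((maxDeg G : ℚ) + maxDeg H + 1) * (domNum H : ℚ) / (Fintype.card W : ℚ)) :
    domNum (G □ H) ≥ domNum G * domNum H :=
  stmt5_general G H AG BG hGbip hGiso hcond
end

section
/- Let G be a k-regular bipartite graph with parts A, B, |A| = |B| = n = k + 2. Suppose there exists a ∈ A whose non-neighbors in B are b₁, b₂, and the open neighborhoods satisfy N(b₁) ≠ N(b₂). Then γ(G) ≤ 3. -/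
def IsRegularOfDeg {V : Type*} (G : SimpleGraph V) (k : ℕ) : Prop :=
  ∀ v, (G.neighborSet v).ncard = k

section

variable {V : Type*} {G : SimpleGraph V} {A B : Finset V} {k : ℕ}

lemma domNum_le_card [Fintype V] {D : Finset V} (hD : IsDominatingSet G ↑D) :
    domNum G ≤ D.card :=
  Nat.sInf_le ⟨D, hD, rfl⟩

lemma IsBipartition.mem_left_of_adj (hbip : IsBipartition G A B) {b v : V} (hb : b ∈ B)
    (hbv : G.Adj b v) : v ∈ A := by
  rcases hbip.2.2 b v hbv with ⟨hbA, -⟩ | ⟨-, hv⟩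
  · exact absurd hb (Finset.disjoint_left.mp hbip.1 hbA)
  · exact hv

lemma IsBipartition.neighborSet_eq_of_not_adj (hbip : IsBipartition G A B)
    (hreg : IsRegularOfDeg G k) (hA : A.card = k + 2) {b u v : V} (hb : b ∈ B)
    (hu : u ∈ A) (hv : v ∈ A) (huv : u ≠ v) (hbu : ¬G.Adj b u) (hbv : ¬G.Adj b v) :
    G.neighborSet b = ↑A \ {u, v} := by
  have hcard : (↑A \ {u, v} : Set V).ncard = k := by
    rw [Set.ncard_sdiff (Set.insert_subset hu (Set.singleton_subset_iff.mpr hv)),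
      Set.ncard_coe_finset, Set.ncard_pair huv, hA]
    rfl
  refine Set.eq_of_subset_of_ncard_le (fun w hbw => ?_) (by rw [hcard, hreg b]) (Set.toFinite _)
  refine ⟨hbip.mem_left_of_adj hb hbw, ?_⟩
  rintro (rfl | rfl)
  exacts [hbu hbw, hbv hbw]

lemma IsBipartition.adj_or_adj_of_neighborSet_ne (hbip : IsBipartition G A B)
    (hreg : IsRegularOfDeg G k) (hA : A.card = k + 2) {a b₁ b₂ v : V} (ha : a ∈ A)
    (hb₁ : b₁ ∈ B) (hb₂ : b₂ ∈ B) (hab₁ : ¬G.Adj a b₁) (hab₂ : ¬G.Adj a b₂)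
    (hN : G.neighborSet b₁ ≠ G.neighborSet b₂) (hv : v ∈ A) (hva : v ≠ a) :
    G.Adj b₁ v ∨ G.Adj b₂ v := by
  by_contra! h
  apply hN
  rw [hbip.neighborSet_eq_of_not_adj hreg hA hb₁ ha hv hva.symm (fun h' => hab₁ h'.symm) h.1,
    hbip.neighborSet_eq_of_not_adj hreg hA hb₂ ha hv hva.symm (fun h' => hab₂ h'.symm) h.2]

end

theorem stmt13_general {V : Type*} [Fintype V] (G : SimpleGraph V) (A B : Finset V) (k n : ℕ)
    (hbip : IsBipartition G A B) (hreg : IsRegularOfDeg G k)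
    (hA : A.card = n) (hn : n = k + 2)
    (a : V) (b₁ b₂ : V) (ha : a ∈ A) (hb₁ : b₁ ∈ B) (hb₂ : b₂ ∈ B)
    (hnadj₁ : ¬ G.Adj a b₁) (hnadj₂ : ¬ G.Adj a b₂)
    (hnonnbrs : ∀ b ∈ B, ¬ G.Adj a b → b = b₁ ∨ b = b₂)
    (hN : G.neighborSet b₁ ≠ G.neighborSet b₂) :
    domNum G ≤ 3 := by
  classical
  have hdom : IsDominatingSet G ↑({a, b₁, b₂} : Finset V) := by
    intro w
    simp only [Finset.coe_insert, Finset.coe_singleton, Set.mem_insert_iff,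
      Set.mem_singleton_iff, exists_eq_or_imp, exists_eq_left]
    rcases hbip.2.1 w with hw | hw
    · by_cases hwa : w = a
      · exact .inl (.inl hwa)
      · exact .inr (.inr (hbip.adj_or_adj_of_neighborSet_ne hreg (hn ▸ hA) ha hb₁ hb₂
          hnadj₁ hnadj₂ hN hw hwa))
    · by_cases haw : G.Adj a w
      · exact .inr (.inl haw)
      · exact .inl (.inr (hnonnbrs w hw haw))
  exact (domNum_le_card hdom).trans Finset.card_le_three

theorem stmt13 {V : Type*} [Fintype V] (G : SimpleGraph V) (A B : Finset V) (k n : ℕ)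
    (hbip : IsBipartition G A B) (hreg : IsRegularOfDeg G k)
    (hA : A.card = n) (hB : B.card = n) (hn : n = k + 2)
    (a : V) (b₁ b₂ : V) (ha : a ∈ A) (hb₁ : b₁ ∈ B) (hb₂ : b₂ ∈ B)
    (hne : b₁ ≠ b₂) (hnadj₁ : ¬ G.Adj a b₁) (hnadj₂ : ¬ G.Adj a b₂)
    (hnonnbrs : ∀ b ∈ B, ¬ G.Adj a b → b = b₁ ∨ b = b₂)
    (hN : G.neighborSet b₁ ≠ G.neighborSet b₂) :
    domNum G ≤ 3 :=
  stmt13_general G A B k n hbip hreg hA hn a b₁ b₂ ha hb₁ hb₂ hnadj₁ hnadj₂ hnonnbrs hN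
end
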